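/- arXiv:2212.08134 — 2 statements merged into one kernel-verified Lean document; each statement's English description precedes it below -/
import Mathlib

section
/- Let G be a regular graph on n vertices whose random walk matrix has spectral expansion λ(G) ≤ λ < 1, with vertex labeling val: V → {0,1} assigning label b to p_b-fraction of vertices. Then the asymptotic variance σ² = p_0p_1 + 2·Σ_{i=1}^∞ (1/n)(val-p_1)^T G^i val satisfies |σ² - p_0p_1| ≤ (2λ/(1-λ))·p_0p_1. -/
/-!
Write `w = val - p₁·𝟙`. Since `G` fixes constant vectors and `w ⊥ 𝟙`, each term of the series is
`(1/n) wᵀ Gⁱ w`; since `G` preserves `𝟙^⊥` and contracts it by `λ`, Cauchy–Schwarz bounds this by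
`λⁱ ‖w‖² / n = λⁱ p₀p₁`. Summing the geometric series gives the claim.
-/

open Matrix Finset

section RandomWalk

variable {V : Type*} [Fintype V] {G : Matrix V V ℝ}

theorem sum_mulVec_of_col_sum (hcol : ∀ v, ∑ v', G v' v = 1) (x : V → ℝ) :
    ∑ v, (G *ᵥ x) v = ∑ v, x v := by
  simp only [mulVec, dotProduct]
  rw [Finset.sum_comm]
  simp [← Finset.sum_mul, hcol]

variable [DecidableEq V]

theorem sum_pow_mulVec_of_col_sum (hcol : ∀ v, ∑ v', G v' v = 1) (x : V → ℝ) (k : ℕ) :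
    ∑ v, ((G ^ k) *ᵥ x) v = ∑ v, x v := by
  induction k with
  | zero => simp
  | succ k ih => rw [pow_succ', ← mulVec_mulVec, sum_mulVec_of_col_sum hcol, ih]

theorem pow_mulVec_const_of_row_sum (hrow : ∀ v', ∑ v, G v' v = 1) (k : ℕ) (c : ℝ) :
    (G ^ k) *ᵥ (fun _ => c) = fun _ => c := by
  induction k with
  | zero => exact one_mulVec _
  | succ k ih =>
    rw [pow_succ', ← mulVec_mulVec, ih]
    funext v'
    simp [mulVec, dotProduct, ← Finset.sum_mul, hrow]

theorem dotProduct_pow_mulVec_add_const (hrow : ∀ v', ∑ v, G v' v = 1) {w : V → ℝ}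
    (hw : ∑ v, w v = 0) (k : ℕ) (x : V → ℝ) (c : ℝ) :
    w ⬝ᵥ (G ^ k) *ᵥ (x + fun _ => c) = w ⬝ᵥ (G ^ k) *ᵥ x := by
  rw [mulVec_add, dotProduct_add, pow_mulVec_const_of_row_sum hrow]
  simp [dotProduct, ← Finset.sum_mul, hw]

variable {lam : ℝ} (hcol : ∀ v, ∑ v', G v' v = 1)
  (hexp : ∀ x : V → ℝ, ∑ v, x v = 0 → ∑ v, (G *ᵥ x) v ^ 2 ≤ lam ^ 2 * ∑ v, x v ^ 2)
include hcol hexp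

theorem sum_sq_pow_mulVec_le {x : V → ℝ} (hx : ∑ v, x v = 0) (k : ℕ) :
    ∑ v, ((G ^ k) *ᵥ x) v ^ 2 ≤ (lam ^ 2) ^ k * ∑ v, x v ^ 2 := by
  induction k with
  | zero => simp
  | succ k ih =>
    have hsum : ∑ v, ((G ^ k) *ᵥ x) v = 0 := by rw [sum_pow_mulVec_of_col_sum hcol, hx]
    rw [pow_succ', ← mulVec_mulVec]
    calc ∑ v, (G *ᵥ ((G ^ k) *ᵥ x)) v ^ 2 ≤ lam ^ 2 * ∑ v, ((G ^ k) *ᵥ x) v ^ 2 := hexp _ hsum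
      _ ≤ lam ^ 2 * ((lam ^ 2) ^ k * ∑ v, x v ^ 2) := by gcongr
      _ = (lam ^ 2) ^ (k + 1) * ∑ v, x v ^ 2 := by ring

theorem abs_dotProduct_pow_mulVec_le (hlam : 0 ≤ lam) {x : V → ℝ} (hx : ∑ v, x v = 0) (k : ℕ) :
    |x ⬝ᵥ (G ^ k) *ᵥ x| ≤ lam ^ k * ∑ v, x v ^ 2 := by
  have hnorm : 0 ≤ ∑ v, x v ^ 2 := by positivity
  apply abs_le_of_sq_le_sq _ (by positivity)
  calc (x ⬝ᵥ (G ^ k) *ᵥ x) ^ 2 ≤ (∑ v, x v ^ 2) * ∑ v, ((G ^ k) *ᵥ x) v ^ 2 :=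
        Finset.sum_mul_sq_le_sq_mul_sq _ _ _
    _ ≤ (∑ v, x v ^ 2) * ((lam ^ 2) ^ k * ∑ v, x v ^ 2) := by
        gcongr; exact sum_sq_pow_mulVec_le hcol hexp hx k
    _ = (lam ^ k * ∑ v, x v ^ 2) ^ 2 := by ring

end RandomWalk

section Labels

variable {V : Type*} [Fintype V] {lab : V → Bool} {p0 p1 : ℝ} {val w : V → ℝ}

theorem sum_centered_label_eq_zero
    (hp1 : p1 = ((univ.filter fun v => lab v = true).card : ℝ) / (Fintype.card V : ℝ))
    (hval : ∀ v, val v = if lab v then 1 else 0) (hw : ∀ v, w v = val v - p1) :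
    ∑ v, w v = 0 := by
  rcases isEmpty_or_nonempty V with _ | _
  · simp
  simp only [hw, hval, Finset.sum_sub_distrib, Finset.sum_boole, Finset.sum_const, card_univ,
    nsmul_eq_mul, hp1]
  field_simp
  simp

theorem sum_sq_centered_label_div_card
    (hp0 : p0 = ((univ.filter fun v => lab v = false).card : ℝ) / (Fintype.card V : ℝ))
    (hp1 : p1 = ((univ.filter fun v => lab v = true).card : ℝ) / (Fintype.card V : ℝ))
    (hval : ∀ v, val v = if lab v then 1 else 0) (hw : ∀ v, w v = val v - p1) :
    (∑ v, w v ^ 2) / Fintype.card V = p0 * p1 := by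
  rcases isEmpty_or_nonempty V with _ | _
  · simp [hp0]
  have hn : (Fintype.card V : ℝ) ≠ 0 := by positivity
  have hcard : ((univ.filter fun v => lab v = false).card : ℝ) +
      (univ.filter fun v => lab v = true).card = Fintype.card V := by
    rw [add_comm]
    exact_mod_cast by simpa using card_filter_add_card_filter_not (s := univ) (lab · = true)
  have hsq : ∀ v, w v ^ 2 = if lab v then (1 - p1) ^ 2 else p1 ^ 2 := by
    intro v
    rw [hw, hval]
    cases lab v <;> simp
  simp only [hsq, Finset.sum_ite, Finset.sum_const, nsmul_eq_mul, Bool.not_eq_true]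
  rw [hp0, hp1]
  field_simp
  rw [← hcard]
  ring

end Labels

theorem asymptotic_variance_close_to_binomial_general
    {V : Type*} [Fintype V] [DecidableEq V] (lab : V → Bool)
    (lam : ℝ) (hlam0 : 0 ≤ lam) (hlam1 : lam < 1)
    (G : Matrix V V ℝ)
    (hcolsum : ∀ v, ∑ v', G v' v = 1)
    (hrowsum : ∀ v', ∑ v, G v' v = 1)
    (hexp : ∀ x : V → ℝ, (∑ v, x v) = 0 →
      ∑ v, (G.mulVec x v) ^ 2 ≤ lam ^ 2 * ∑ v, (x v) ^ 2)
    (p0 p1 : ℝ)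
    (hp0 : p0 = ((univ.filter fun v => lab v = false).card : ℝ) / (Fintype.card V : ℝ))
    (hp1 : p1 = ((univ.filter fun v => lab v = true).card : ℝ) / (Fintype.card V : ℝ))
    (val w : V → ℝ) (hval : ∀ v, val v = if lab v then 1 else 0)
    (hw : ∀ v, w v = val v - p1)
    (σ2 : ℝ)
    (hσ2 : σ2 = p0 * p1 +
      2 * (∑' i : ℕ, (1 / (Fintype.card V : ℝ)) * (w ⬝ᵥ (G ^ (i + 1)).mulVec val))) :
    |σ2 - p0 * p1| ≤ 2 * lam / (1 - lam) * (p0 * p1) := by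
  have hw_sum : ∑ v, w v = 0 := sum_centered_label_eq_zero hp1 hval hw
  have hval_eq : val = w + fun _ => p1 := funext fun v => by simp [hw]
  have hterm : ∀ i : ℕ, ‖(1 / (Fintype.card V : ℝ)) * (w ⬝ᵥ (G ^ (i + 1)).mulVec val)‖ ≤
      p0 * p1 * lam * lam ^ i := by
    intro i
    rw [hval_eq, dotProduct_pow_mulVec_add_const hrowsum hw_sum, Real.norm_eq_abs, abs_mul,
      abs_of_nonneg (by positivity), ← sum_sq_centered_label_div_card hp0 hp1 hval hw]
    calc 1 / (Fintype.card V : ℝ) * |w ⬝ᵥ (G ^ (i + 1)) *ᵥ w|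
        ≤ 1 / (Fintype.card V : ℝ) * (lam ^ (i + 1) * ∑ v, w v ^ 2) := by
          gcongr
          exact abs_dotProduct_pow_mulVec_le hcolsum hexp hlam0 hw_sum _
      _ = (∑ v, w v ^ 2) / Fintype.card V * lam * lam ^ i := by ring
  have hgeom := (hasSum_geometric_of_lt_one hlam0 hlam1).mul_left (p0 * p1 * lam)
  have htsum := tsum_of_norm_bounded hgeom hterm
  rw [Real.norm_eq_abs] at htsum
  rw [hσ2, add_sub_cancel_left, abs_mul, abs_two]
  calc 2 * |_| ≤ 2 * (p0 * p1 * lam * (1 - lam)⁻¹) := by gcongr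
    _ = 2 * lam / (1 - lam) * (p0 * p1) := by ring

/-- For a regular graph with random walk matrix of spectral expansion at most λ < 1,
the asymptotic variance σ² = p₀p₁ + 2·Σ_{i≥1}(1/n)(val-p₁)ᵀGⁱval satisfies
|σ² - p₀p₁| ≤ (2λ/(1-λ))·p₀p₁. -/
theorem asymptotic_variance_close_to_binomial
    {V : Type*} [Fintype V] [DecidableEq V] (lab : V → Bool)
    (lam : ℝ) (hlam0 : 0 ≤ lam) (hlam1 : lam < 1)
    (G : Matrix V V ℝ)
    (hnonneg : ∀ v' v, 0 ≤ G v' v)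
    (hcolsum : ∀ v, ∑ v', G v' v = 1)
    (hrowsum : ∀ v', ∑ v, G v' v = 1)
    (hexp : ∀ x : V → ℝ, (∑ v, x v) = 0 →
      ∑ v, (G.mulVec x v) ^ 2 ≤ lam ^ 2 * ∑ v, (x v) ^ 2)
    (p0 p1 : ℝ)
    (hp0 : p0 = ((univ.filter fun v => lab v = false).card : ℝ) / (Fintype.card V : ℝ))
    (hp1 : p1 = ((univ.filter fun v => lab v = true).card : ℝ) / (Fintype.card V : ℝ))
    (val w : V → ℝ) (hval : ∀ v, val v = if lab v then 1 else 0)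
    (hw : ∀ v, w v = val v - p1)
    (σ2 : ℝ)
    (hσ2 : σ2 = p0 * p1 +
      2 * (∑' i : ℕ, (1 / (Fintype.card V : ℝ)) * (w ⬝ᵥ (G ^ (i + 1)).mulVec val))) :
    |σ2 - p0 * p1| ≤ 2 * lam / (1 - lam) * (p0 * p1) :=
  asymptotic_variance_close_to_binomial_general lab lam hlam0 hlam1 G hcolsum hrowsum hexp p0 p1 hp0
    hp1 val w hval hw σ2 hσ2
end

section
/- For any real u ≥ 2 and integer t with u ≤ t, the integral bound Σ_{a=⌈8√(u log u)⌉}^∞ (a+1)³ e^{-a²/(8u)} ≤ 2⁸·u²·(6 log u + 1)/u⁶ ≤ 2⁸ holds; more precisely, Σ_{a ≥ 8√(u log u)} (a+1)³ e^{-a²/(8u)} ≤ ∫_{8√(u log u)-1}^∞ (2a)³ e^{-a²/(8u)} da ≤ 2⁸ u² ∫_{6 log u}^∞ q e^{-q} dq = 2⁸ u² (6 log u + 1) e^{-6 log u}. -/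
/-!
For `a ≥ 3` and `x ∈ [a - 1, a]` we have `a + 1 ≤ 2x` and `x² ≤ a²`, so each term `(a+1)³e^{-a²/8u}`
is at most the integral of `(2x)³e^{-x²/8u}` over `[a - 1, a]`, and the tail sum is dominated by the
tail integral from `c = 8√(u log u) - 1`. Substituting `q = x²/8u` turns that integral into
`2⁸u²(q₀ + 1)e^{-q₀}` with `q₀ = c²/8u ≥ 6 log u` (as `c ≥ 7√(u log u)`), and `(q + 1)e^{-q}` is
decreasing; finally `6 log u + 1 ≤ 6u - 5 ≤ u⁴`.
-/

open MeasureTheory Set Filter Topology Real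

theorem tsum_le_integral_Ioi_of_le_intervalIntegral {f : ℕ → ℝ} {g : ℝ → ℝ} {c : ℝ} {N : ℕ}
    (hc : c ≤ N - 1) (hf : ∀ n, 0 ≤ f n) (hfN : ∀ n < N, f n = 0)
    (hfg : ∀ n, N ≤ n → f n ≤ ∫ x in (n - 1 : ℝ)..n, g x)
    (hg : IntegrableOn g (Ioi c)) (hg0 : ∀ x ∈ Ioi c, 0 ≤ g x) :
    ∑' n, f n ≤ ∫ x in Ioi c, g x := by
  refine Real.tsum_le_of_sum_range_le hf fun n => ?_
  rcases le_or_gt n N with hn | hn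
  · rw [Finset.sum_eq_zero fun i hi => hfN i ((Finset.mem_range.1 hi).trans_le hn)]
    exact setIntegral_nonneg measurableSet_Ioi hg0
  have hIoc : ∀ k : ℕ, N ≤ k → Ioc ((k : ℝ) - 1) ((k + 1 : ℕ) - 1) ⊆ Ioi c := fun k hk =>
    Ioc_subset_Ioi_self.trans (Ioi_subset_Ioi (hc.trans (by gcongr)))
  calc ∑ i ∈ Finset.range n, f i = ∑ i ∈ Finset.Ico N n, f i :=
        (Finset.sum_subset (fun i hi => Finset.mem_range.2 (Finset.mem_Ico.1 hi).2)
          fun i _ hi => hfN i (by simp_all)).symm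
    _ ≤ ∑ i ∈ Finset.Ico N n, ∫ x in ((i : ℕ) : ℝ) - 1..((i + 1 : ℕ) : ℝ) - 1, g x :=
        Finset.sum_le_sum fun i hi => by
          simpa using hfg i (Finset.mem_Ico.1 hi).1
    _ = ∫ x in (N : ℝ) - 1..(n : ℝ) - 1, g x :=
        intervalIntegral.sum_integral_adjacent_intervals_Ico hn.le fun k hk =>
          (intervalIntegrable_iff_integrableOn_Ioc_of_le (by push_cast; linarith)).2
            (hg.mono_set (hIoc k hk.1))
    _ ≤ ∫ x in Ioi c, g x := by
        rw [intervalIntegral.integral_of_le (by gcongr)]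
        exact setIntegral_mono_set hg (ae_restrict_of_forall_mem measurableSet_Ioi hg0)
          (Ioc_subset_Ioi_self.trans (Ioi_subset_Ioi hc)).eventuallyLE

theorem antitoneOn_add_one_mul_exp_neg : AntitoneOn (fun q : ℝ => (q + 1) * exp (-q)) (Ici 0) := by
  intro a (ha : 0 ≤ a) b _ hab
  have hexp : (b - a) + 1 ≤ exp (b - a) := add_one_le_exp _
  have hsplit : exp (-a) = exp (b - a) * exp (-b) := by rw [← exp_add]; ring_nf
  have hgrowth : b + 1 ≤ (a + 1) * exp (b - a) := by nlinarith
  simp only [hsplit, ← mul_assoc]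
  exact mul_le_mul_of_nonneg_right hgrowth (exp_pos _).le

theorem integrable_pow_three_mul_exp_neg_sq_div {s : ℝ} (hs : 0 < s) :
    Integrable fun x : ℝ => x ^ 3 * exp (-x ^ 2 / s) := by
  convert integrable_rpow_mul_exp_neg_mul_sq (inv_pos.2 hs) (s := 3) (by norm_num) using 2 with x
  rw [← Real.rpow_natCast]; push_cast; ring_nf

theorem tendsto_add_one_mul_exp_neg_atTop :
    Tendsto (fun q : ℝ => (q + 1) * exp (-q)) atTop (𝓝 0) := by
  have h := (tendsto_pow_mul_exp_neg_atTop_nhds_zero 1).add tendsto_exp_neg_atTop_nhds_zero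
  simp only [pow_one, add_zero] at h
  exact h.congr fun q => by ring

theorem integral_Ioi_pow_three_mul_exp_neg_sq_div {s : ℝ} (hs : 0 < s) (c : ℝ) :
    ∫ x in Ioi c, x ^ 3 * exp (-x ^ 2 / s) = s / 2 * (c ^ 2 + s) * exp (-c ^ 2 / s) := by
  set F : ℝ → ℝ := fun x => -(s / 2 * (x ^ 2 + s) * exp (-x ^ 2 / s))
  have hderiv (x : ℝ) : HasDerivAt F (x ^ 3 * exp (-x ^ 2 / s)) x := by
    have hq : HasDerivAt (fun y : ℝ => -y ^ 2 / s) (-(2 * x) / s) x := by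
      simpa using ((hasDerivAt_pow 2 x).neg).div_const s
    have hp : HasDerivAt (fun y : ℝ => s / 2 * (y ^ 2 + s)) (s / 2 * (2 * x)) x := by
      simpa using ((hasDerivAt_pow 2 x).add_const s).const_mul (s / 2)
    refine (hp.mul hq.exp).neg.congr_deriv ?_
    field_simp
    ring
  -- With `q = x² / s` the antiderivative is `-(s² / 2) (q + 1) e^{-q}`.
  have hlim : Tendsto F atTop (𝓝 0) := by
    have hq : Tendsto (fun x : ℝ => x ^ 2 / s) atTop atTop :=
      (tendsto_pow_atTop two_ne_zero).atTop_div_const hs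
    convert (tendsto_add_one_mul_exp_neg_atTop.comp hq).const_mul (-(s ^ 2 / 2)) using 1
    · ext x
      simp only [F, Function.comp]
      field_simp
    · simp
  rw [integral_Ioi_of_hasDerivAt_of_tendsto' (fun x _ => hderiv x)
    (integrable_pow_three_mul_exp_neg_sq_div hs).integrableOn hlim]
  simp only [F]
  ring

theorem integral_Ioi_two_mul_pow_three_mul_exp_neg_sq_div {s : ℝ} (hs : 0 < s) (c : ℝ) :
    ∫ x in Ioi c, (2 * x) ^ 3 * exp (-x ^ 2 / s) =
      4 * s ^ 2 * ((c ^ 2 / s + 1) * exp (-(c ^ 2 / s))) := by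
  simp_rw [mul_pow, mul_assoc]
  rw [integral_const_mul, integral_Ioi_pow_three_mul_exp_neg_sq_div hs, neg_div]
  field_simp
  ring

theorem add_one_pow_three_mul_exp_neg_sq_div_le_intervalIntegral {s a : ℝ} (hs : 0 ≤ s)
    (ha : 3 ≤ a) :
    (a + 1) ^ 3 * exp (-a ^ 2 / s) ≤ ∫ x in (a - 1)..a, (2 * x) ^ 3 * exp (-x ^ 2 / s) := by
  have hle : ∀ x ∈ Icc (a - 1) a,
      (a + 1) ^ 3 * exp (-a ^ 2 / s) ≤ (2 * x) ^ 3 * exp (-x ^ 2 / s) := by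
    rintro x ⟨hx₁, hx₂⟩
    have hcube : a + 1 ≤ 2 * x := by linarith
    have hsq : x ^ 2 ≤ a ^ 2 := by nlinarith
    gcongr
    exact pow_nonneg (by linarith) 3
  calc (a + 1) ^ 3 * exp (-a ^ 2 / s)
      = ∫ _ in (a - 1)..a, (a + 1) ^ 3 * exp (-a ^ 2 / s) := by simp
    _ ≤ ∫ x in (a - 1)..a, (2 * x) ^ 3 * exp (-x ^ 2 / s) :=
        intervalIntegral.integral_mono_on (by linarith) intervalIntegrable_const
          ((by fun_prop : Continuous fun x : ℝ => (2 * x) ^ 3 * exp (-x ^ 2 / s)).intervalIntegrable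
            _ _) hle

theorem one_le_sqrt_mul_log {u : ℝ} (hu : 2 ≤ u) : 1 ≤ √(u * log u) := by
  have hlog : 0.6931471803 < log u := log_two_gt_d9.trans_le (log_le_log (by norm_num) hu)
  exact one_le_sqrt.2 (by nlinarith)

theorem tsum_gaussian_tail_le_integral {u : ℝ} (hu : 2 ≤ u) :
    (∑' a : ℕ, if 8 * √(u * log u) ≤ (a : ℝ) then
        ((a : ℝ) + 1) ^ 3 * exp (-(a : ℝ) ^ 2 / (8 * u)) else 0)
      ≤ ∫ a in Ioi (8 * √(u * log u) - 1), (2 * a) ^ 3 * exp (-a ^ 2 / (8 * u)) := by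
  set M := 8 * √(u * log u)
  have hM : 8 ≤ M := by linarith [one_le_sqrt_mul_log hu]
  refine tsum_le_integral_Ioi_of_le_intervalIntegral (N := ⌈M⌉₊)
    (by linarith [Nat.le_ceil M]) (fun n => by split_ifs <;> positivity)
    (fun n hn => if_neg (Nat.lt_ceil.1 hn).not_ge) (fun n hn => ?_) ?_ ?_
  · rw [if_pos (Nat.ceil_le.1 hn)]
    exact add_one_pow_three_mul_exp_neg_sq_div_le_intervalIntegral (by positivity)
      (by linarith [Nat.ceil_le.1 hn])
  · simpa only [mul_pow, mul_assoc] using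
      ((integrable_pow_three_mul_exp_neg_sq_div (by positivity : 0 < 8 * u)).const_mul
        (2 ^ 3)).integrableOn
  · intro x hx
    have : 0 ≤ x := by linarith [mem_Ioi.1 hx]
    positivity

theorem integral_gaussian_tail_le {u : ℝ} (hu : 2 ≤ u) :
    ∫ a in Ioi (8 * √(u * log u) - 1), (2 * a) ^ 3 * exp (-a ^ 2 / (8 * u))
      ≤ 2 ^ 8 * u ^ 2 * (6 * log u + 1) / u ^ 6 := by
  have hu₀ : 0 < u := by linarith
  have hlog : 0 ≤ log u := log_nonneg (by linarith)
  set c := 8 * √(u * log u) - 1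
  have hc : 7 * √(u * log u) ≤ c := by linarith [one_le_sqrt_mul_log hu]
  have hc2 : 49 * (u * log u) ≤ c ^ 2 := by
    have := pow_le_pow_left₀ (by positivity) hc 2
    rw [mul_pow, sq_sqrt (by positivity)] at this
    linarith
  have hq : 6 * log u ≤ c ^ 2 / (8 * u) := by
    rw [le_div_iff₀ (by positivity)]
    nlinarith
  have hexp : exp (6 * log u) = u ^ 6 := by
    rw [show (6 : ℝ) * log u = ((6 : ℕ) : ℝ) * log u by norm_num, exp_nat_mul, exp_log hu₀]
  rw [integral_Ioi_two_mul_pow_three_mul_exp_neg_sq_div (by positivity)]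
  calc 4 * (8 * u) ^ 2 * ((c ^ 2 / (8 * u) + 1) * exp (-(c ^ 2 / (8 * u))))
      ≤ 4 * (8 * u) ^ 2 * ((6 * log u + 1) * exp (-(6 * log u))) := by
        gcongr 4 * (8 * u) ^ 2 * ?_
        have h6 : 0 ≤ 6 * log u := by positivity
        exact antitoneOn_add_one_mul_exp_neg h6 (h6.trans hq) hq
    _ = 2 ^ 8 * u ^ 2 * (6 * log u + 1) / u ^ 6 := by
        rw [exp_neg, hexp]
        ring

theorem gaussian_tail_bound_le {u : ℝ} (hu : 2 ≤ u) :
    2 ^ 8 * u ^ 2 * (6 * log u + 1) / u ^ 6 ≤ 2 ^ 8 := by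
  have hu₀ : 0 < u := by linarith
  have hcube : 2 ^ 3 ≤ u ^ 3 := by gcongr
  have hpoly : 6 * log u + 1 ≤ u ^ 4 := by nlinarith [log_le_sub_one_of_pos hu₀]
  rw [div_le_iff₀ (by positivity)]
  nlinarith [pow_pos hu₀ 2]

theorem gaussian_tail_sum_bound_general
    (u : ℝ) (hu : 2 ≤ u) :
    (∑' a : ℕ, if 8 * Real.sqrt (u * Real.log u) ≤ (a : ℝ) then
        ((a : ℝ) + 1) ^ 3 * Real.exp (-(a : ℝ) ^ 2 / (8 * u)) else 0)
      ≤ (∫ a in Set.Ioi (8 * Real.sqrt (u * Real.log u) - 1),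
          (2 * a) ^ 3 * Real.exp (-a ^ 2 / (8 * u))) ∧
    (∫ a in Set.Ioi (8 * Real.sqrt (u * Real.log u) - 1),
        (2 * a) ^ 3 * Real.exp (-a ^ 2 / (8 * u)))
      ≤ 2 ^ 8 * u ^ 2 * (6 * Real.log u + 1) / u ^ 6 ∧
    2 ^ 8 * u ^ 2 * (6 * Real.log u + 1) / u ^ 6 ≤ 2 ^ 8 :=
  ⟨tsum_gaussian_tail_le_integral hu, integral_gaussian_tail_le hu, gaussian_tail_bound_le hu⟩

/-- Gaussian tail sum bound: Σ_{a ≥ 8√(u log u)} (a+1)³e^{-a²/(8u)} is bounded by the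
corresponding integral, which is at most 2⁸u²(6 log u + 1)/u⁶ ≤ 2⁸, for u ≥ 2. -/
theorem gaussian_tail_sum_bound
    (u : ℝ) (hu : 2 ≤ u) (t : ℕ) (hut : u ≤ t) :
    (∑' a : ℕ, if 8 * Real.sqrt (u * Real.log u) ≤ (a : ℝ) then
        ((a : ℝ) + 1) ^ 3 * Real.exp (-(a : ℝ) ^ 2 / (8 * u)) else 0)
      ≤ (∫ a in Set.Ioi (8 * Real.sqrt (u * Real.log u) - 1),
          (2 * a) ^ 3 * Real.exp (-a ^ 2 / (8 * u))) ∧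
    (∫ a in Set.Ioi (8 * Real.sqrt (u * Real.log u) - 1),
        (2 * a) ^ 3 * Real.exp (-a ^ 2 / (8 * u)))
      ≤ 2 ^ 8 * u ^ 2 * (6 * Real.log u + 1) / u ^ 6 ∧
    2 ^ 8 * u ^ 2 * (6 * Real.log u + 1) / u ^ 6 ≤ 2 ^ 8 :=
  gaussian_tail_sum_bound_general u hu
end
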